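/- Let F : [0,∞) → ℝ be convex with F ∈ C^2((0,∞)), F(0) = 0, and F'(0) > −∞ (finite right derivative at 0). Let f, g ∈ L^1_+(ℝ^d) with ∫ f = ∫ g, and suppose C_f(α) ≤ C_g(α) for all α ≥ 0. Then ∫ F(f(x)) dx ≤ ∫ F(g(x)) dx. -/

import Mathlib

open MeasureTheory Set Metric ENNReal

noncomputable section

abbrev Rd (d : ℕ) := EuclideanSpace ℝ (Fin d)

/-- Modulus of absolute continuity of a density. -/
def Cfun {d : ℕ} (f : Rd d → ℝ) (α : ℝ) : ℝ :=
  sSup {r | ∃ E : Set (Rd d), MeasurableSet E ∧ volume E = ENNReal.ofReal α ∧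
      r = ∫ x in E, f x}

namespace Stmt9

variable {F : ℝ → ℝ} {L : ℝ}

lemma hda (hFC2 : ContDiffOn ℝ 2 F (Ioi 0)) {t : ℝ} (ht : 0 < t) :
    HasDerivAt F (deriv F t) t :=
  ((hFC2.contDiffAt (isOpen_Ioi.mem_nhds ht)).differentiableAt (by norm_num)).hasDerivAt

lemma hda2 (hFC2 : ContDiffOn ℝ 2 F (Ioi 0)) {t : ℝ} (ht : 0 < t) :
    HasDerivAt (deriv F) (deriv (deriv F) t) t := by
  have h1 : ContDiffOn ℝ 1 (deriv F) (Ioi 0) :=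
    hFC2.deriv_of_isOpen isOpen_Ioi (by norm_num)
  exact ((h1.contDiffAt (isOpen_Ioi.mem_nhds ht)).differentiableAt (by norm_num)).hasDerivAt

lemma cont2 (hFC2 : ContDiffOn ℝ 2 F (Ioi 0)) :
    ContinuousOn (deriv (deriv F)) (Ioi 0) := by
  have h1 : ContDiffOn ℝ 1 (deriv F) (Ioi 0) :=
    hFC2.deriv_of_isOpen isOpen_Ioi (by norm_num)
  exact h1.continuousOn_deriv_of_isOpen isOpen_Ioi le_rfl

lemma derivMono (hFconv : ConvexOn ℝ (Ici 0) F) (hFC2 : ContDiffOn ℝ 2 F (Ioi 0)) :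
    MonotoneOn (deriv F) (Ioi 0) := by
  intro s hs t ht hst
  rcases eq_or_lt_of_le hst with rfl | h
  · exact le_rfl
  · calc deriv F s ≤ slope F s t :=
        hFconv.deriv_le_slope (Ioi_subset_Ici_self hs) (Ioi_subset_Ici_self ht) h (hda hFC2 hs).differentiableAt
    _ ≤ deriv F t :=
        hFconv.slope_le_deriv (Ioi_subset_Ici_self hs) (Ioi_subset_Ici_self ht) h (hda hFC2 ht).differentiableAt

end Stmt9
namespace Stmt9
variable {F : ℝ → ℝ} {L : ℝ}

lemma deriv2_nonneg (hFconv : ConvexOn ℝ (Ici 0) F) (hFC2 : ContDiffOn ℝ 2 F (Ioi 0))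
    {t : ℝ} (ht : 0 < t) : 0 ≤ deriv (deriv F) t := by
  have hu := hasDerivAt_iff_tendsto_slope.mp (hda2 hFC2 ht)
  refine ge_of_tendsto hu ?_
  filter_upwards [self_mem_nhdsWithin,
    mem_nhdsWithin_of_mem_nhds (isOpen_Ioi.mem_nhds ht)] with y hy hy0
  have hmono := derivMono hFconv hFC2
  rw [slope_def_field]
  rcases lt_or_gt_of_ne (hy : y ≠ t) with h | h
  · have h1 : deriv F y ≤ deriv F t := hmono hy0 ht h.le
    exact div_nonneg_iff.mpr (Or.inr ⟨by linarith, by linarith⟩)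
  · have h1 : deriv F t ≤ deriv F y := hmono ht hy0 h.le
    apply div_nonneg <;> linarith

lemma L_le_deriv (hFconv : ConvexOn ℝ (Ici 0) F) (hFC2 : ContDiffOn ℝ 2 F (Ioi 0))
    (hL : HasDerivWithinAt F L (Ici 0) 0) {t : ℝ} (ht : 0 < t) : L ≤ deriv F t := by
  calc L ≤ slope F 0 t := hFconv.le_slope_of_hasDerivWithinAt self_mem_Ici ht.le ht hL
  _ ≤ deriv F t := hFconv.slope_le_deriv self_mem_Ici ht.le ht (hda hFC2 ht).differentiableAt

lemma L_mul_le (hFconv : ConvexOn ℝ (Ici 0) F) (hF0 : F 0 = 0)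
    (hL : HasDerivWithinAt F L (Ici 0) 0) {y : ℝ} (hy : 0 ≤ y) : L * y ≤ F y := by
  rcases eq_or_lt_of_le hy with rfl | hy'
  · simp [hF0]
  · have h := hFconv.le_slope_of_hasDerivWithinAt self_mem_Ici hy'.le hy' hL
    rw [slope_def_field, hF0, sub_zero, sub_zero] at h
    calc L * y ≤ (F y / y) * y := by nlinarith
    _ = F y := by field_simp

lemma tendsto_deriv (hFconv : ConvexOn ℝ (Ici 0) F) (hFC2 : ContDiffOn ℝ 2 F (Ioi 0))
    (hL : HasDerivWithinAt F L (Ici 0) 0) :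
    Filter.Tendsto (deriv F) (nhdsWithin 0 (Ioi 0)) (nhds L) := by
  rw [tendsto_order]
  constructor
  · intro l hl
    filter_upwards [self_mem_nhdsWithin] with a ha
    exact hl.trans_le (L_le_deriv hFconv hFC2 hL ha)
  · intro u hu
    -- pick y > 0 with slope F 0 y < u
    have hslope : Filter.Tendsto (slope F 0) (nhdsWithin 0 (Ici 0 \ {0})) (nhds L) :=
      hasDerivWithinAt_iff_tendsto_slope.mp hL
    have hset : Ici (0:ℝ) \ {0} = Ioi 0 := by
      ext z; simp [lt_iff_le_and_ne, eq_comm, and_comm]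
    rw [hset] at hslope
    have hev : ∀ᶠ y in nhdsWithin (0:ℝ) (Ioi 0), slope F 0 y < u ∧ 0 < y := by
      filter_upwards [hslope.eventually_lt_const hu, self_mem_nhdsWithin] with y h1 h2
      exact ⟨h1, h2⟩
    obtain ⟨y, hyu, hy0⟩ := hev.exists
    rw [slope_def_field, sub_zero] at hyu
    -- slope F a y → F y / y < u as a → 0+
    have hFc : Filter.Tendsto F (nhdsWithin 0 (Ioi 0)) (nhds (F 0)) :=
      (hL.continuousWithinAt).tendsto.mono_left (nhdsWithin_mono _ Ioi_subset_Ici_self)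
    have htend : Filter.Tendsto (fun a => (F y - F a) / (y - a)) (nhdsWithin 0 (Ioi 0))
        (nhds ((F y - F 0) / (y - 0))) := by
      apply Filter.Tendsto.div
      · exact tendsto_const_nhds.sub hFc
      · exact tendsto_const_nhds.sub
          ((continuous_id.tendsto 0).mono_left nhdsWithin_le_nhds)
      · simpa using hy0.ne'
    have hlt : (F y - F 0) / (y - 0) < u := by rwa [sub_zero]
    filter_upwards [htend.eventually_lt_const hlt,
      Ioo_mem_nhdsGT_of_mem ⟨le_refl (0:ℝ), hy0⟩] with a h1 h2
    have ha0 : 0 < a := h2.1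
    have hay : a < y := h2.2
    calc deriv F a ≤ slope F a y :=
      hFconv.deriv_le_slope ha0.le hy0.le hay (hda hFC2 ha0).differentiableAt
    _ < u := by rwa [slope_def_field]

end Stmt9
namespace Stmt9
variable {F : ℝ → ℝ} {L : ℝ}

lemma ftc (hFC2 : ContDiffOn ℝ 2 F (Ioi 0)) {a y : ℝ} (ha : 0 < a) (hay : a ≤ y) :
    ∫ t in a..y, deriv (deriv F) t * (y - t)
      = F y - F a - deriv F a * (y - a) := by
  have huIcc : uIcc a y = Icc a y := uIcc_of_le hay
  have hsub : Icc a y ⊆ Ioi 0 := fun t ht => lt_of_lt_of_le ha ht.1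
  have hH : ∀ t ∈ uIcc a y,
      HasDerivAt (fun t => F y - F t - deriv F t * (y - t))
        (-(deriv (deriv F) t * (y - t))) t := by
    intro t ht
    rw [huIcc] at ht
    have h0t : 0 < t := hsub ht
    have h1 := hda hFC2 h0t
    have h2 := hda2 hFC2 h0t
    have h3 : HasDerivAt (fun t => deriv F t * (y - t))
        (deriv (deriv F) t * (y - t) + deriv F t * (-1)) t :=
      h2.mul ((hasDerivAt_id t).const_sub y)
    have := ((hasDerivAt_const t (F y)).sub h1).sub h3
    exact this.congr_deriv (by ring)
  have hInt : IntervalIntegrable (fun t => -(deriv (deriv F) t * (y - t))) volume a y := by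
    apply ContinuousOn.intervalIntegrable
    rw [huIcc]
    exact (((cont2 hFC2).mono hsub).mul (continuousOn_const.sub continuousOn_id)).neg
  have := intervalIntegral.integral_eq_sub_of_hasDerivAt hH hInt
  have h4 : ∫ t in a..y, -(deriv (deriv F) t * (y - t))
      = -∫ t in a..y, deriv (deriv F) t * (y - t) := intervalIntegral.integral_neg
  rw [h4] at this
  have h5 : F y - F y - deriv F y * (y - y) = 0 := by ring
  rw [h5] at this  -- careful shapes
  linarith [this]

end Stmt9
namespace Stmt9
variable {F : ℝ → ℝ} {L : ℝ}

lemma rep (hFconv : ConvexOn ℝ (Ici 0) F) (hFC2 : ContDiffOn ℝ 2 F (Ioi 0))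
    (hF0 : F 0 = 0) (hL : HasDerivWithinAt F L (Ici 0) 0) {y : ℝ} (hy : 0 ≤ y) :
    ENNReal.ofReal (F y - L * y)
      = ∫⁻ t in Ioi (0:ℝ), ENNReal.ofReal (deriv (deriv F) t) * ENNReal.ofReal (y - t) := by
  set G : ℝ → ℝ≥0∞ := fun t => ENNReal.ofReal (deriv (deriv F) t) * ENNReal.ofReal (y - t)
    with hG
  have hGmeas : Measurable G :=
    (ENNReal.measurable_ofReal.comp (measurable_deriv (deriv F))).mul
      (ENNReal.measurable_ofReal.comp (measurable_const.sub measurable_id))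
  rcases eq_or_lt_of_le hy with rfl | hy0
  · rw [hF0]
    simp only [mul_zero, sub_zero, ENNReal.ofReal_zero]
    rw [setLIntegral_congr_fun measurableSet_Ioi
      (fun t (ht : 0 < t) => ?_), lintegral_zero]
    rw [show ENNReal.ofReal (0 - t) = 0 from ENNReal.ofReal_eq_zero.mpr (by linarith), mul_zero]
  -- main case 0 < y
  set u : ℕ → ℝ := fun n => y / (n + 2) with hu
  have hupos : ∀ n, 0 < u n := fun n => div_pos hy0 (by positivity)
  have huley : ∀ n, u n ≤ y := fun n =>
    div_le_self hy0.le (by have := Nat.cast_nonneg (α := ℝ) n; linarith)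
  have hu0 : Filter.Tendsto u Filter.atTop (nhds 0) := by
    rw [hu]
    have : Filter.Tendsto (fun n : ℕ => ((n : ℝ) + 2)) Filter.atTop Filter.atTop :=
      Filter.tendsto_atTop_add_const_right _ 2 tendsto_natCast_atTop_atTop
    simpa using Filter.Tendsto.div_atTop tendsto_const_nhds this
  -- Step 1: RHS as a sup
  have hstep1 : ∫⁻ t in Ioi (0:ℝ), G t = ⨆ n, ∫⁻ t in Ioc (u n) y, G t := by
    have hpt : ∀ t, (Ioi (0:ℝ)).indicator G t = ⨆ n, (Ioc (u n) y).indicator G t := by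
      intro t
      apply le_antisymm
      · by_cases ht : t ∈ Ioi (0:ℝ)
        · rw [indicator_of_mem ht]
          by_cases hty : t < y
          · obtain ⟨n, hn⟩ := (hu0.eventually (eventually_lt_nhds ht)).exists
            have htmem : t ∈ Ioc (u n) y := ⟨hn, hty.le⟩
            exact le_iSup_of_le n (le_of_eq (Set.indicator_of_mem htmem G).symm)
          · have : G t = 0 := by
              rw [hG]
              simp only []
              rw [show ENNReal.ofReal (y - t) = 0 from
                ENNReal.ofReal_eq_zero.mpr (by linarith), mul_zero]
            simp [this]
        · rw [indicator_of_notMem ht]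
          exact zero_le
      · refine iSup_le fun n => ?_
        exact Set.indicator_le_indicator_of_subset
          (fun z hz => lt_trans (hupos n) hz.1) (fun _ => zero_le) t
    calc ∫⁻ t in Ioi (0:ℝ), G t = ∫⁻ t, (Ioi (0:ℝ)).indicator G t :=
          (lintegral_indicator measurableSet_Ioi G).symm
    _ = ∫⁻ t, ⨆ n, (Ioc (u n) y).indicator G t := by
          exact lintegral_congr hpt
    _ = ⨆ n, ∫⁻ t, (Ioc (u n) y).indicator G t := by
          apply lintegral_iSup
          · exact fun n => hGmeas.indicator measurableSet_Ioc
          · intro n m hnm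
            apply indicator_le_indicator_of_subset
            · apply Ioc_subset_Ioc_left
              rw [hu]
              apply div_le_div_of_nonneg_left hy0.le (by positivity)
              exact_mod_cast by omega
            · exact fun t => zero_le
    _ = ⨆ n, ∫⁻ t in Ioc (u n) y, G t := by
          exact iSup_congr fun n => lintegral_indicator measurableSet_Ioc G
  -- Step 2: each term is explicit
  have hstep2 : ∀ n, ∫⁻ t in Ioc (u n) y, G t
      = ENNReal.ofReal (F y - F (u n) - deriv F (u n) * (y - u n)) := by
    intro n
    have hIcc : Icc (u n) y ⊆ Ioi 0 := fun t ht => lt_of_lt_of_le (hupos n) ht.1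
    have hcont : ContinuousOn (fun t => deriv (deriv F) t * (y - t)) (Icc (u n) y) :=
      ((cont2 hFC2).mono hIcc).mul (continuousOn_const.sub continuousOn_id)
    have hInt : IntegrableOn (fun t => deriv (deriv F) t * (y - t)) (Ioc (u n) y) :=
      (hcont.integrableOn_Icc).mono_set Ioc_subset_Icc_self
    have hnn : 0 ≤ᵐ[volume.restrict (Ioc (u n) y)] fun t => deriv (deriv F) t * (y - t) := by
      refine (ae_restrict_iff' measurableSet_Ioc).mpr (ae_of_all _ fun t ht => ?_)
      exact mul_nonneg (deriv2_nonneg hFconv hFC2 ((hupos n).trans ht.1)) (by linarith [ht.2])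
    calc ∫⁻ t in Ioc (u n) y, G t
        = ∫⁻ t in Ioc (u n) y, ENNReal.ofReal (deriv (deriv F) t * (y - t)) := by
          apply setLIntegral_congr_fun measurableSet_Ioc
          refine fun t ht => ?_
          rw [hG]
          simp only []
          rw [ENNReal.ofReal_mul (deriv2_nonneg hFconv hFC2 ((hupos n).trans ht.1))]
    _ = ENNReal.ofReal (∫ t in Ioc (u n) y, deriv (deriv F) t * (y - t)) :=
          (ofReal_integral_eq_lintegral_ofReal hInt hnn).symm
    _ = ENNReal.ofReal (F y - F (u n) - deriv F (u n) * (y - u n)) := by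
          rw [← intervalIntegral.integral_of_le (huley n), ftc hFC2 (hupos n) (huley n)]
  -- Step 3: sup equals limit
  have humem : Filter.Tendsto u Filter.atTop (nhdsWithin 0 (Ioi 0)) := by
    rw [tendsto_nhdsWithin_iff]
    exact ⟨hu0, Filter.Eventually.of_forall fun n => hupos n⟩
  have hFc : Filter.Tendsto (fun n => F (u n)) Filter.atTop (nhds 0) := by
    have h := (hL.continuousWithinAt.tendsto.mono_left
      (nhdsWithin_mono _ Ioi_subset_Ici_self)).comp humem
    rwa [hF0] at h
  have hdc : Filter.Tendsto (fun n => deriv F (u n)) Filter.atTop (nhds L) :=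
    (tendsto_deriv hFconv hFC2 hL).comp humem
  have hc : Filter.Tendsto (fun n => F y - F (u n) - deriv F (u n) * (y - u n))
      Filter.atTop (nhds (F y - L * y)) := by
    have hA : Filter.Tendsto (fun n => F y - F (u n)) Filter.atTop (nhds (F y - 0)) :=
      Filter.Tendsto.sub tendsto_const_nhds hFc
    have hB : Filter.Tendsto (fun n => y - u n) Filter.atTop (nhds (y - 0)) :=
      Filter.Tendsto.sub tendsto_const_nhds hu0
    have hC : Filter.Tendsto (fun n => deriv F (u n) * (y - u n)) Filter.atTop
        (nhds (L * (y - 0))) := hdc.mul hB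
    have hD := hA.sub hC
    simpa using hD
  have hmonoseq : Monotone fun n =>
      ENNReal.ofReal (F y - F (u n) - deriv F (u n) * (y - u n)) := by
    intro n m hnm
    show ENNReal.ofReal _ ≤ ENNReal.ofReal _
    rw [← hstep2 n, ← hstep2 m]
    apply lintegral_mono_set
    apply Ioc_subset_Ioc_left
    rw [hu]
    apply div_le_div_of_nonneg_left hy0.le (by positivity)
    exact_mod_cast by omega
  have h1 : Filter.Tendsto (fun n =>
      ENNReal.ofReal (F y - F (u n) - deriv F (u n) * (y - u n))) Filter.atTop
      (nhds (⨆ n, ENNReal.ofReal (F y - F (u n) - deriv F (u n) * (y - u n)))) :=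
    tendsto_atTop_iSup hmonoseq
  have h2 : Filter.Tendsto (fun n =>
      ENNReal.ofReal (F y - F (u n) - deriv F (u n) * (y - u n))) Filter.atTop
      (nhds (ENNReal.ofReal (F y - L * y))) :=
    (ENNReal.continuous_ofReal.tendsto _).comp hc
  rw [hstep1]
  calc ENNReal.ofReal (F y - L * y)
      = ⨆ n, ENNReal.ofReal (F y - F (u n) - deriv F (u n) * (y - u n)) :=
        tendsto_nhds_unique h2 h1
  _ = ⨆ n, ∫⁻ t in Ioc (u n) y, G t := iSup_congr fun n => (hstep2 n).symm

end Stmt9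
namespace Stmt9

lemma ofReal_eq_ofReal_max (a : ℝ) : ENNReal.ofReal a = ENNReal.ofReal (max a 0) := by
  rcases le_total a 0 with h | h
  · rw [ENNReal.ofReal_eq_zero.mpr h, max_eq_right h, ENNReal.ofReal_zero]
  · rw [max_eq_left h]

lemma max_sub_integrable {d : ℕ} {g : Rd d → ℝ} (hg : Integrable g)
    (hgm : Measurable g) (hg0 : ∀ x, 0 ≤ g x) {t : ℝ} (ht : 0 < t) :
    Integrable (fun x : Rd d => max (g x - t) 0) := by
  refine Integrable.mono hg ((hgm.sub measurable_const).max measurable_const).aestronglyMeasurable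
    (ae_of_all _ fun x => ?_)
  rw [Real.norm_eq_abs, Real.norm_eq_abs, abs_of_nonneg (le_max_right _ _),
    abs_of_nonneg (hg0 x)]
  rcases le_total (g x - t) 0 with h | h
  · rw [max_eq_right h]; exact hg0 x
  · rw [max_eq_left h]; linarith

lemma level_le {d : ℕ} {f g : Rd d → ℝ} (hf : Integrable f) (hg : Integrable g)
    (hfm : Measurable f) (hgm : Measurable g)
    (hf0 : ∀ x, 0 ≤ f x) (hg0 : ∀ x, 0 ≤ g x)
    (hC : ∀ α : ℝ, 0 ≤ α → Cfun f α ≤ Cfun g α) {t : ℝ} (ht : 0 < t) :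
    ∫⁻ x, ENNReal.ofReal (f x - t) ≤ ∫⁻ x, ENNReal.ofReal (g x - t) := by
  classical
  set E : Set (Rd d) := {x | t < f x} with hE
  have hEmeas : MeasurableSet E := measurableSet_lt measurable_const hfm
  have hEfin : volume E < ⊤ := by
    refine lt_of_le_of_lt (measure_mono ?_) (hf.measure_ge_lt_top ht)
    exact fun x (hx : t < f x) => hx.le
  set α : ℝ := (volume E).toReal with hα
  have hα0 : 0 ≤ α := ENNReal.toReal_nonneg
  have hαvol : ENNReal.ofReal α = volume E := ENNReal.ofReal_toReal hEfin.ne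
  -- integrability facts
  have hfmax := max_sub_integrable hf hfm hf0 ht
  have hgmax := max_sub_integrable hg hgm hg0 ht
  -- ∫ max (f - t) 0 = ∫_E f - t * α
  have hfE : ∫ x, max (f x - t) 0 = (∫ x in E, f x) - t * α := by
    have h1 : (fun x => max (f x - t) 0) = E.indicator (fun x => f x - t) := by
      funext x
      by_cases hx : x ∈ E
      · rw [indicator_of_mem hx, max_eq_left (by exact sub_nonneg.mpr (le_of_lt hx))]
      · rw [indicator_of_notMem hx, max_eq_right]
        simp only [hE, mem_setOf_eq, not_lt] at hx
        linarith
    rw [h1, integral_indicator hEmeas]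
    have h2 : IntegrableOn f E volume := hf.integrableOn
    have h3 : IntegrableOn (fun _ => t) E volume := by
      exact integrableOn_const hEfin.ne
    rw [integral_sub h2 h3, setIntegral_const]
    simp [hα, smul_eq_mul, mul_comm, measureReal_def]
  -- ∫_E f ≤ Cfun f α
  have hbddf : (∫ x in E, f x) ≤ Cfun f α := by
    apply le_csSup
    · refine ⟨∫ x, f x, ?_⟩
      rintro r ⟨E', hE', hvol', rfl⟩
      exact setIntegral_le_integral hf (ae_of_all _ hf0)
    · exact ⟨E, hEmeas, hαvol.symm ▸ rfl, rfl⟩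
  -- Cfun g α ≤ ∫ max (g - t) 0 + t * α
  have hCg : Cfun g α ≤ (∫ x, max (g x - t) 0) + t * α := by
    apply csSup_le
    · exact ⟨∫ x in E, g x, E, hEmeas, hαvol.symm, rfl⟩
    · rintro r ⟨E', hE', hvol', rfl⟩
      have hE'fin : volume E' < ⊤ := by rw [hvol']; exact ENNReal.ofReal_lt_top
      have h3 : IntegrableOn (fun _ => t) E' volume := by
        exact integrableOn_const hE'fin.ne
      have h4 : ∫ x in E', g x = (∫ x in E', g x - t) + t * α := by
        rw [integral_sub hg.integrableOn h3, setIntegral_const, measureReal_def, hvol',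
          ENNReal.toReal_ofReal hα0]
        ring_nf
      rw [h4]
      have h5 : (∫ x in E', g x - t) ≤ ∫ x in E', max (g x - t) 0 := by
        apply setIntegral_mono_on (hg.integrableOn.sub h3) hgmax.integrableOn hE'
        exact fun x _ => le_max_left _ _
      have h6 : (∫ x in E', max (g x - t) 0) ≤ ∫ x, max (g x - t) 0 :=
        setIntegral_le_integral hgmax (ae_of_all _ fun x => le_max_right _ _)
      linarith
  have hreal : (∫ x, max (f x - t) 0) ≤ ∫ x, max (g x - t) 0 := by
    have := hC α hα0
    linarith [hfE, hbddf, hCg]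
  calc ∫⁻ x, ENNReal.ofReal (f x - t)
      = ∫⁻ x, ENNReal.ofReal (max (f x - t) 0) := by
        exact lintegral_congr fun x => ofReal_eq_ofReal_max _
  _ = ENNReal.ofReal (∫ x, max (f x - t) 0) :=
      (ofReal_integral_eq_lintegral_ofReal hfmax
        (ae_of_all _ fun x => le_max_right _ _)).symm
  _ ≤ ENNReal.ofReal (∫ x, max (g x - t) 0) := ENNReal.ofReal_le_ofReal hreal
  _ = ∫⁻ x, ENNReal.ofReal (max (g x - t) 0) :=
      ofReal_integral_eq_lintegral_ofReal hgmax (ae_of_all _ fun x => le_max_right _ _)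
  _ = ∫⁻ x, ENNReal.ofReal (g x - t) := by
        exact lintegral_congr fun x => (ofReal_eq_ofReal_max _).symm

end Stmt9
namespace Stmt9
variable {F : ℝ → ℝ} {L : ℝ}

lemma key_rep {d : ℕ} (hFconv : ConvexOn ℝ (Ici 0) F) (hFC2 : ContDiffOn ℝ 2 F (Ioi 0))
    (hF0 : F 0 = 0) (hL : HasDerivWithinAt F L (Ici 0) 0)
    {h : Rd d → ℝ} (hm : Measurable h) (h0 : ∀ x, 0 ≤ h x) :
    ∫⁻ x, ENNReal.ofReal (F (h x) - L * h x)
      = ∫⁻ t in Ioi (0:ℝ), ENNReal.ofReal (deriv (deriv F) t)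
          * ∫⁻ x, ENNReal.ofReal (h x - t) := by
  have hpt : ∀ x, ENNReal.ofReal (F (h x) - L * h x)
      = ∫⁻ t in Ioi (0:ℝ), ENNReal.ofReal (deriv (deriv F) t) * ENNReal.ofReal (h x - t) :=
    fun x => rep hFconv hFC2 hF0 hL (h0 x)
  calc ∫⁻ x, ENNReal.ofReal (F (h x) - L * h x)
      = ∫⁻ x, ∫⁻ t in Ioi (0:ℝ),
          ENNReal.ofReal (deriv (deriv F) t) * ENNReal.ofReal (h x - t) :=
        lintegral_congr hpt
  _ = ∫⁻ t in Ioi (0:ℝ), ∫⁻ x,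
          ENNReal.ofReal (deriv (deriv F) t) * ENNReal.ofReal (h x - t) := by
        apply lintegral_lintegral_swap
        apply Measurable.aemeasurable
        refine Measurable.mul (f := fun p : Rd d × ℝ => ENNReal.ofReal (deriv (deriv F) p.2))
          (g := fun p : Rd d × ℝ => ENNReal.ofReal (h p.1 - p.2)) ?_ ?_
        · exact ENNReal.measurable_ofReal.comp ((measurable_deriv (deriv F)).comp measurable_snd)
        · exact ENNReal.measurable_ofReal.comp ((hm.comp measurable_fst).sub measurable_snd)
  _ = ∫⁻ t in Ioi (0:ℝ), ENNReal.ofReal (deriv (deriv F) t)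
          * ∫⁻ x, ENNReal.ofReal (h x - t) := by
        refine lintegral_congr fun t => ?_
        exact lintegral_const_mul _ (ENNReal.measurable_ofReal.comp (hm.sub measurable_const))

lemma main_meas {d : ℕ} (hFconv : ConvexOn ℝ (Ici 0) F) (hFC2 : ContDiffOn ℝ 2 F (Ioi 0))
    (hF0 : F 0 = 0) (hL : HasDerivWithinAt F L (Ici 0) 0)
    {f g : Rd d → ℝ} (hf : Integrable f) (hg : Integrable g)
    (hfm : Measurable f) (hgm : Measurable g)
    (hf0 : ∀ x, 0 ≤ f x) (hg0 : ∀ x, 0 ≤ g x)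
    (hmass : ∫ x, f x = ∫ x, g x)
    (hFf : Integrable (fun x => F (f x))) (hFg : Integrable (fun x => F (g x)))
    (hC : ∀ α : ℝ, 0 ≤ α → Cfun f α ≤ Cfun g α) :
    ∫ x, F (f x) ≤ ∫ x, F (g x) := by
  have hIf : Integrable (fun x => F (f x) - L * f x) := hFf.sub (hf.const_mul L)
  have hIg : Integrable (fun x => F (g x) - L * g x) := hFg.sub (hg.const_mul L)
  have hnnf : 0 ≤ᵐ[volume] fun x => F (f x) - L * f x :=
    ae_of_all _ fun x => sub_nonneg.mpr (L_mul_le hFconv hF0 hL (hf0 x))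
  have hnng : 0 ≤ᵐ[volume] fun x => F (g x) - L * g x :=
    ae_of_all _ fun x => sub_nonneg.mpr (L_mul_le hFconv hF0 hL (hg0 x))
  have hIfeq : ENNReal.ofReal (∫ x, (F (f x) - L * f x))
      = ∫⁻ x, ENNReal.ofReal (F (f x) - L * f x) :=
    ofReal_integral_eq_lintegral_ofReal hIf hnnf
  have hIgeq : ENNReal.ofReal (∫ x, (F (g x) - L * g x))
      = ∫⁻ x, ENNReal.ofReal (F (g x) - L * g x) :=
    ofReal_integral_eq_lintegral_ofReal hIg hnng
  have hlint : ∫⁻ x, ENNReal.ofReal (F (f x) - L * f x)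
      ≤ ∫⁻ x, ENNReal.ofReal (F (g x) - L * g x) := by
    rw [key_rep hFconv hFC2 hF0 hL hfm hf0, key_rep hFconv hFC2 hF0 hL hgm hg0]
    apply lintegral_mono_ae
    refine (ae_restrict_iff' measurableSet_Ioi).mpr (ae_of_all _ fun t (ht : 0 < t) => ?_)
    exact mul_le_mul_right (level_le hf hg hfm hgm hf0 hg0 hC ht) _
  have hreal : (∫ x, (F (f x) - L * f x)) ≤ ∫ x, (F (g x) - L * g x) := by
    have h1 : ENNReal.ofReal (∫ x, (F (f x) - L * f x))
        ≤ ENNReal.ofReal (∫ x, (F (g x) - L * g x)) := by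
      rw [hIfeq, hIgeq]; exact hlint
    have h2 : 0 ≤ ∫ x, (F (f x) - L * f x) := integral_nonneg_of_ae hnnf
    have h3 : 0 ≤ ∫ x, (F (g x) - L * g x) := integral_nonneg_of_ae hnng
    rwa [ENNReal.ofReal_le_ofReal_iff h3] at h1
  have hfsplit : ∫ x, F (f x) = (∫ x, (F (f x) - L * f x)) + L * ∫ x, f x := by
    rw [integral_sub hFf (hf.const_mul L), integral_const_mul]
    ring
  have hgsplit : ∫ x, F (g x) = (∫ x, (F (g x) - L * g x)) + L * ∫ x, g x := by
    rw [integral_sub hFg (hg.const_mul L), integral_const_mul]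
    ring
  rw [hfsplit, hgsplit, hmass]
  linarith

end Stmt9
namespace Stmt9

lemma Cfun_congr {d : ℕ} {f f' : Rd d → ℝ} (h : f =ᵐ[volume] f') : Cfun f = Cfun f' := by
  funext α
  unfold Cfun
  congr 1
  ext r
  constructor
  · rintro ⟨E, hE, hvol, rfl⟩
    exact ⟨E, hE, hvol, integral_congr_ae (ae_restrict_of_ae h)⟩
  · rintro ⟨E, hE, hvol, rfl⟩
    exact ⟨E, hE, hvol, integral_congr_ae (ae_restrict_of_ae h.symm)⟩

end Stmt9


/-- Convex domination: if `f` is less concentrated than `g` and they have the same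
mass, then `∫ F(f) ≤ ∫ F(g)` for convex `F` with `F(0) = 0` and finite right
derivative at `0`. -/
theorem stmt9 {d : ℕ} (F : ℝ → ℝ)
    (hFconv : ConvexOn ℝ (Ici (0 : ℝ)) F)
    (hFC2 : ContDiffOn ℝ 2 F (Ioi (0 : ℝ)))
    (hF0 : F 0 = 0)
    (hF' : ∃ L : ℝ, HasDerivWithinAt F L (Ici (0 : ℝ)) 0)
    (f g : Rd d → ℝ) (hf : Integrable f) (hg : Integrable g)
    (hf0 : ∀ x, 0 ≤ f x) (hg0 : ∀ x, 0 ≤ g x)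
    (hmass : ∫ x, f x = ∫ x, g x)
    (hFf : Integrable (fun x => F (f x))) (hFg : Integrable (fun x => F (g x)))
    (hC : ∀ α : ℝ, 0 ≤ α → Cfun f α ≤ Cfun g α) :
    ∫ x, F (f x) ≤ ∫ x, F (g x) := by
  obtain ⟨L, hL⟩ := hF'
  set f' : Rd d → ℝ := fun x => max (hf.1.aemeasurable.mk f x) 0 with hf'def
  set g' : Rd d → ℝ := fun x => max (hg.1.aemeasurable.mk g x) 0 with hg'def
  have hf'm : Measurable f' := hf.1.aemeasurable.measurable_mk.max measurable_const
  have hg'm : Measurable g' := hg.1.aemeasurable.measurable_mk.max measurable_const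
  have hff' : f =ᵐ[volume] f' := by
    filter_upwards [hf.1.aemeasurable.ae_eq_mk] with x hx
    rw [hf'def]
    simp only []
    rw [← hx, max_eq_left (hf0 x)]
  have hgg' : g =ᵐ[volume] g' := by
    filter_upwards [hg.1.aemeasurable.ae_eq_mk] with x hx
    rw [hg'def]
    simp only []
    rw [← hx, max_eq_left (hg0 x)]
  have hf' : Integrable f' := hf.congr hff'
  have hg' : Integrable g' := hg.congr hgg'
  have hf'0 : ∀ x, 0 ≤ f' x := fun x => le_max_right _ _
  have hg'0 : ∀ x, 0 ≤ g' x := fun x => le_max_right _ _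
  have hFf' : Integrable (fun x => F (f' x)) :=
    hFf.congr (hff'.mono fun x hx => congrArg F hx)
  have hFg' : Integrable (fun x => F (g' x)) :=
    hFg.congr (hgg'.mono fun x hx => congrArg F hx)
  have hmass' : ∫ x, f' x = ∫ x, g' x := by
    rw [← integral_congr_ae hff', ← integral_congr_ae hgg', hmass]
  have hC' : ∀ α : ℝ, 0 ≤ α → Cfun f' α ≤ Cfun g' α := by
    intro α hα
    rw [← Stmt9.Cfun_congr hff', ← Stmt9.Cfun_congr hgg']
    exact hC α hα
  calc ∫ x, F (f x) = ∫ x, F (f' x) := integral_congr_ae (hff'.mono fun x hx => congrArg F hx)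
  _ ≤ ∫ x, F (g' x) := Stmt9.main_meas hFconv hFC2 hF0 hL hf' hg' hf'm hg'm hf'0 hg'0
      hmass' hFf' hFg' hC'
  _ = ∫ x, F (g x) := (integral_congr_ae (hgg'.mono fun x hx => congrArg F hx)).symm
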